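/- For all β ∈ ℂ and all u, v ∈ L²(ℂ) with z u, z v ∈ L²(ℂ): P_σ(R_β u, R_β v) = P_σ(u,v) - (β conj(Q_σ(u,v)) + β̄ Q_σ(u,v)) + |β|²(M(u) + σM(v)). -/

import Mathlib

/-!
Since `R_β` only changes the phase, `|R_β u|(z) = |u|(z + β)`. Substituting `w = z + β` turns
`P_σ(R_β u, R_β v)` into `∫ (|w - β|² - 1) ρ(w)` with `ρ = |u|² + σ|v|²`, and expanding
`|w - β|² = |w|² - 2 Re(w β̄) + |β|²` produces the three terms; the middle one integrates to
`2 Re(Q_σ β̄) = β Q̄_σ + β̄ Q_σ`.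
-/

open MeasureTheory Complex

noncomputable section

/-- Magnetic translation R_β. -/
def Rmag (β : ℂ) (u : ℂ → ℂ) (z : ℂ) : ℂ :=
  u (z + β) * Complex.exp (((starRingEnd ℂ) z * β - z * (starRingEnd ℂ) β) / 2)

/-- The mass M(u) = ∫ |u|². -/
def Mass (u : ℂ → ℂ) : ℝ := ∫ z : ℂ, ‖u z‖ ^ 2

/-- The magnetic momentum Q_σ(u,v) = ∫ z(|u|² + σ|v|²). -/
def Qmom (σ : ℝ) (u v : ℂ → ℂ) : ℂ :=
  ∫ z : ℂ, z * (((‖u z‖ ^ 2 + σ * ‖v z‖ ^ 2 : ℝ)) : ℂ)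

/-- The angular momentum P_σ(u,v) = ∫ (|z|²-1)(|u|² + σ|v|²). -/
def Pmom (σ : ℝ) (u v : ℂ → ℂ) : ℝ :=
  ∫ z : ℂ, (‖z‖ ^ 2 - 1) * (‖u z‖ ^ 2 + σ * ‖v z‖ ^ 2)

lemma norm_Rmag (β : ℂ) (u : ℂ → ℂ) (z : ℂ) : ‖Rmag β u z‖ = ‖u (z + β)‖ := by
  have h : (((starRingEnd ℂ) z * β - z * (starRingEnd ℂ) β) / 2).re = 0 := by
    simp only [div_ofNat_re, sub_re, mul_re, conj_re, conj_im]
    ring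
  rw [Rmag, norm_mul, norm_exp, h, Real.exp_zero, mul_one]

lemma integrable_mul_ofReal_of_integrable_norm_sq_mul {g : ℂ → ℝ} (hg : Integrable g volume)
    (hzg : Integrable (fun z => ‖z‖ ^ 2 * g z) volume) :
    Integrable (fun z => z * (g z : ℂ)) volume := by
  refine (hg.norm.add hzg.norm).mono'
    (continuous_id.aestronglyMeasurable.mul (continuous_ofReal.comp_aestronglyMeasurable hg.1))
    (Filter.Eventually.of_forall fun z => ?_)
  simp only [Pi.add_apply, norm_mul, norm_real, norm_pow, norm_norm]
  nlinarith [norm_nonneg (g z), sq_nonneg (‖z‖ - 1)]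

lemma re_mul_conj_integral_mul_ofReal {g : ℂ → ℝ}
    (hQ : Integrable (fun z => z * (g z : ℂ)) volume) (β : ℂ) :
    ((∫ z, z * (g z : ℂ)) * starRingEnd ℂ β).re = ∫ z, (z * starRingEnd ℂ β).re * g z := by
  rw [← integral_mul_const, ← RCLike.re_to_complex, ← integral_re (hQ.mul_const _)]
  refine integral_congr_ae (Filter.Eventually.of_forall fun z => ?_)
  simp only [RCLike.re_to_complex, mul_right_comm _ (g z : ℂ), re_mul_ofReal]

lemma integral_norm_sub_sq_sub_one_mul {g : ℂ → ℝ} (hg : Integrable g volume)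
    (hzg : Integrable (fun z => ‖z‖ ^ 2 * g z) volume) (β : ℂ) :
    (((∫ z, (‖z - β‖ ^ 2 - 1) * g z : ℝ)) : ℂ)
      = ((∫ z, (‖z‖ ^ 2 - 1) * g z : ℝ) : ℂ)
        - (β * (starRingEnd ℂ) (∫ z, z * (g z : ℂ)) + (starRingEnd ℂ) β * ∫ z, z * (g z : ℂ))
        + ((‖β‖ ^ 2 : ℝ) : ℂ) * ((∫ z, g z : ℝ) : ℂ) := by
  set Q := ∫ z, z * (g z : ℂ)
  have hQ := integrable_mul_ofReal_of_integrable_norm_sq_mul hg hzg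
  have hP : Integrable (fun z => (‖z‖ ^ 2 - 1) * g z) volume :=
    (hzg.sub hg).congr (Filter.Eventually.of_forall fun z => by simp only [Pi.sub_apply]; ring)
  have hcross : Integrable (fun z => 2 * ((z * starRingEnd ℂ β).re * g z)) volume :=
    ((hQ.mul_const (starRingEnd ℂ β)).re.congr (Filter.Eventually.of_forall fun z => by
      simp only [RCLike.re_to_complex, mul_right_comm _ (g z : ℂ), re_mul_ofReal])).const_mul 2
  have hPcross : Integrable (fun z => (‖z‖ ^ 2 - 1) * g z - 2 * ((z * starRingEnd ℂ β).re * g z))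
      volume := hP.sub hcross
  have hcross_eq : β * starRingEnd ℂ Q + starRingEnd ℂ β * Q
      = ((2 * ∫ z, (z * starRingEnd ℂ β).re * g z : ℝ) : ℂ) := by
    rw [← re_mul_conj_integral_mul_ofReal hQ, ← add_conj, map_mul, conj_conj]
    ring
  have hexpand : ∀ z : ℂ, (‖z - β‖ ^ 2 - 1) * g z
      = (‖z‖ ^ 2 - 1) * g z - 2 * ((z * starRingEnd ℂ β).re * g z) + ‖β‖ ^ 2 * g z := by
    intro z
    rw [Complex.sq_norm, Complex.sq_norm, Complex.sq_norm, normSq_sub]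
    ring
  simp only [hexpand]
  rw [integral_add hPcross (hg.const_mul _), integral_sub hP hcross, integral_const_mul,
    integral_const_mul, hcross_eq]
  push_cast
  ring

def massDensity (σ : ℝ) (u v : ℂ → ℂ) (z : ℂ) : ℝ := ‖u z‖ ^ 2 + σ * ‖v z‖ ^ 2

section

variable (σ : ℝ) {u v : ℂ → ℂ}

lemma integrable_massDensity (hu : MemLp u 2 volume) (hv : MemLp v 2 volume) :
    Integrable (massDensity σ u v) volume :=
  (hu.integrable_norm_pow two_ne_zero).add ((hv.integrable_norm_pow two_ne_zero).const_mul σ)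

lemma integrable_norm_sq_mul_massDensity (hzu : MemLp (fun z : ℂ => z * u z) 2 volume)
    (hzv : MemLp (fun z : ℂ => z * v z) 2 volume) :
    Integrable (fun z => ‖z‖ ^ 2 * massDensity σ u v z) volume :=
  ((hzu.integrable_norm_pow two_ne_zero).add
    ((hzv.integrable_norm_pow two_ne_zero).const_mul σ)).congr
    (Filter.Eventually.of_forall fun z => by
      simp only [Pi.add_apply, massDensity, norm_mul, mul_pow]
      ring)

lemma integral_massDensity (hu : MemLp u 2 volume) (hv : MemLp v 2 volume) :
    ∫ z, massDensity σ u v z = Mass u + σ * Mass v :=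
  (integral_add (hu.integrable_norm_pow two_ne_zero)
    ((hv.integrable_norm_pow two_ne_zero).const_mul σ)).trans
    (congrArg _ (integral_const_mul σ _))

lemma Pmom_Rmag (β : ℂ) (u v : ℂ → ℂ) :
    Pmom σ (Rmag β u) (Rmag β v) = ∫ z, (‖z - β‖ ^ 2 - 1) * massDensity σ u v z := by
  rw [← integral_add_right_eq_self _ β]
  simp only [Pmom, massDensity, norm_Rmag, add_sub_cancel_right]

end

theorem stmt11_general (σ : ℝ) (β : ℂ) (u v : ℂ → ℂ)
    (hu : MemLp u 2 volume) (hv : MemLp v 2 volume)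
    (hzu : MemLp (fun z : ℂ => z * u z) 2 volume)
    (hzv : MemLp (fun z : ℂ => z * v z) 2 volume) :
    ((Pmom σ (Rmag β u) (Rmag β v) : ℝ) : ℂ)
      = ((Pmom σ u v : ℝ) : ℂ)
        - (β * (starRingEnd ℂ) (Qmom σ u v) + (starRingEnd ℂ) β * Qmom σ u v)
        + ((‖β‖ ^ 2 : ℝ) : ℂ) * ((Mass u + σ * Mass v : ℝ) : ℂ) := by
  rw [Pmom_Rmag, ← integral_massDensity σ hu hv]
  exact integral_norm_sub_sq_sub_one_mul (integrable_massDensity σ hu hv)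
    (integrable_norm_sq_mul_massDensity σ hzu hzv) β

/-- P_σ(R_β u, R_β v) = P_σ(u,v) - (β Q̄_σ + β̄ Q_σ) + |β|²(M(u) + σM(v)). -/
theorem stmt11 (σ : ℝ) (hσ : σ = 1 ∨ σ = -1) (β : ℂ) (u v : ℂ → ℂ)
    (hu : MemLp u 2 volume) (hv : MemLp v 2 volume)
    (hzu : MemLp (fun z : ℂ => z * u z) 2 volume)
    (hzv : MemLp (fun z : ℂ => z * v z) 2 volume) :
    ((Pmom σ (Rmag β u) (Rmag β v) : ℝ) : ℂ)
      = ((Pmom σ u v : ℝ) : ℂ)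
        - (β * (starRingEnd ℂ) (Qmom σ u v) + (starRingEnd ℂ) β * Qmom σ u v)
        + ((‖β‖ ^ 2 : ℝ) : ℂ) * ((Mass u + σ * Mass v : ℝ) : ℂ) :=
  stmt11_general σ β u v hu hv hzu hzv
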